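/- Let α ∈ ℂ \ {0, 1} and Ω ∈ ℂ, and let R₁(z) = (12z³ + 4(1 − 5α + 4Ω)z² + α(5α − 4 − 16Ω)z + 3α²)/(16z²(z − 1)(z − α)²). Define u(z) = (1/2)(1/z + 4/(z − 1) + 1/(z − α)). If the identity u''(z) + 3u(z)u'(z) + u(z)³ − 4u(z)R₁(z) = 2R₁'(z) holds for every z ∈ ℂ \ {0, 1, α}, then Ω = 0. -/

import Mathlib

/-!
The Case 2 condition `u'' + 3uu' + u³ - 4uR₁ - 2R₁' = 0` is linear in `R₁`, and `R₁` depends on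
`Ω` only through the summand `Ω q` with `q = 1/(z(z-1)(z-α))`. The `Ω`-free part satisfies the
condition exactly, while `4uq + 2q' = 2q(2u + q'/q) = 6q/(z-1)` because
`2u + q'/q = 3/(z-1)`. So the left side equals `-6Ω/(z(z-1)²(z-α))`, and evaluating at any
point outside `{0, 1, α}` forces `Ω = 0`.
-/

noncomputable section

def pendulumR (α Ω z : ℂ) : ℂ :=
  (12 * z ^ 3 + 4 * (1 - 5 * α + 4 * Ω) * z ^ 2 + α * (5 * α - 4 - 16 * Ω) * z + 3 * α ^ 2)
    / (16 * z ^ 2 * (z - 1) * (z - α) ^ 2)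

def caseTwoU (α z : ℂ) : ℂ := (1 / 2) * (1 / z + 4 / (z - 1) + 1 / (z - α))

end

theorem hasDerivAt_const_div_sub_pow (c a w : ℂ) (n : ℕ) (hw : w ≠ a) :
    HasDerivAt (fun z => c / (z - a) ^ n) (-(n * c) / (w - a) ^ (n + 1)) w := by
  have hwa : w - a ≠ 0 := sub_ne_zero.2 hw
  refine ((hasDerivAt_const w c).fun_div (((hasDerivAt_id' w).sub_const a).fun_pow n)
    (pow_ne_zero n hwa)).congr_deriv ?_
  rcases n with _ | n
  · simp
  · rw [Nat.add_sub_cancel]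
    field_simp
    ring

theorem hasDerivAt_caseTwoU {α w : ℂ} (h0 : w ≠ 0) (h1 : w ≠ 1) (hα : w ≠ α) :
    HasDerivAt (caseTwoU α) (-(1 / 2) * (1 / w ^ 2 + 4 / (w - 1) ^ 2 + 1 / (w - α) ^ 2)) w := by
  have := (((hasDerivAt_const_div_sub_pow 1 0 w 1 h0).fun_add
    (hasDerivAt_const_div_sub_pow 4 1 w 1 h1)).fun_add
    (hasDerivAt_const_div_sub_pow 1 α w 1 hα)).const_mul (1 / 2 : ℂ)
  simp only [sub_zero, pow_one] at this
  refine this.congr_deriv ?_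
  norm_num
  ring

theorem hasDerivAt_deriv_caseTwoU {α w : ℂ} (h0 : w ≠ 0) (h1 : w ≠ 1) (hα : w ≠ α) :
    HasDerivAt (deriv (caseTwoU α)) (1 / w ^ 3 + 4 / (w - 1) ^ 3 + 1 / (w - α) ^ 3) w := by
  have hderiv : deriv (caseTwoU α) =ᶠ[nhds w]
      fun z => -(1 / 2) * (1 / z ^ 2 + 4 / (z - 1) ^ 2 + 1 / (z - α) ^ 2) := by
    filter_upwards [eventually_ne_nhds h0, eventually_ne_nhds h1, eventually_ne_nhds hα]
      with z hz0 hz1 hzα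
    exact (hasDerivAt_caseTwoU hz0 hz1 hzα).deriv
  have := (((hasDerivAt_const_div_sub_pow 1 0 w 2 h0).fun_add
    (hasDerivAt_const_div_sub_pow 4 1 w 2 h1)).fun_add
    (hasDerivAt_const_div_sub_pow 1 α w 2 hα)).const_mul (-(1 / 2) : ℂ)
  simp only [sub_zero] at this
  refine (this.congr_of_eventuallyEq hderiv).congr_deriv ?_
  norm_num
  ring

theorem hasDerivAt_pendulumR {α Ω w : ℂ} (h0 : w ≠ 0) (h1 : w ≠ 1) (hα : w ≠ α) :
    HasDerivAt (pendulumR α Ω)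
      (((36 * w ^ 2 + 8 * (1 - 5 * α + 4 * Ω) * w + α * (5 * α - 4 - 16 * Ω))
          * (16 * w ^ 2 * (w - 1) * (w - α) ^ 2)
        - (12 * w ^ 3 + 4 * (1 - 5 * α + 4 * Ω) * w ^ 2 + α * (5 * α - 4 - 16 * Ω) * w
            + 3 * α ^ 2)
          * (32 * w * (w - 1) * (w - α) ^ 2 + 16 * w ^ 2 * (w - α) ^ 2
            + 32 * w ^ 2 * (w - 1) * (w - α)))
      / (16 * w ^ 2 * (w - 1) * (w - α) ^ 2) ^ 2) w := by
  have hnum := ((((hasDerivAt_pow 3 w).const_mul 12).fun_add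
      ((hasDerivAt_pow 2 w).const_mul (4 * (1 - 5 * α + 4 * Ω)))).fun_add
      ((hasDerivAt_id' w).const_mul (α * (5 * α - 4 - 16 * Ω)))).add_const (3 * α ^ 2)
  have hden := (((hasDerivAt_pow 2 w).const_mul 16).fun_mul
      ((hasDerivAt_id' w).sub_const 1)).fun_mul (((hasDerivAt_id' w).sub_const α).fun_pow 2)
  have hden0 : (16 * w ^ 2 * (w - 1) * (w - α) ^ 2 : ℂ) ≠ 0 := by
    simp [h0, sub_ne_zero.2 h1, sub_ne_zero.2 hα]
  refine (hnum.fun_div hden hden0).congr_deriv ?_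
  norm_num
  ring

theorem caseTwo_residual_eq {α Ω w : ℂ} (h0 : w ≠ 0) (h1 : w ≠ 1) (hα : w ≠ α) :
    deriv (deriv (caseTwoU α)) w + 3 * caseTwoU α w * deriv (caseTwoU α) w + caseTwoU α w ^ 3
      - 4 * caseTwoU α w * pendulumR α Ω w - 2 * deriv (pendulumR α Ω) w
      = -(6 * Ω) / (w * (w - 1) ^ 2 * (w - α)) := by
  rw [(hasDerivAt_deriv_caseTwoU h0 h1 hα).deriv, (hasDerivAt_caseTwoU h0 h1 hα).deriv,
    (hasDerivAt_pendulumR h0 h1 hα).deriv]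
  have h1' : w - 1 ≠ 0 := sub_ne_zero.2 h1
  have hα' : w - α ≠ 0 := sub_ne_zero.2 hα
  simp only [caseTwoU, pendulumR]
  field_simp
  ring

theorem kovacic_case_two_forces_Omega_zero_general
    (α Ω : ℂ)
    (R₁ u : ℂ → ℂ)
    (hR₁ : R₁ = fun z => (12 * z ^ 3 + 4 * (1 - 5 * α + 4 * Ω) * z ^ 2
        + α * (5 * α - 4 - 16 * Ω) * z + 3 * α ^ 2)
      / (16 * z ^ 2 * (z - 1) * (z - α) ^ 2))
    (hu : u = fun z => (1 / 2) * (1 / z + 4 / (z - 1) + 1 / (z - α)))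
    (hId : ∀ z : ℂ, z ≠ 0 → z ≠ 1 → z ≠ α →
      deriv (deriv u) z + 3 * u z * deriv u z + u z ^ 3 - 4 * u z * R₁ z
        = 2 * deriv R₁ z) :
    Ω = 0 := by
  subst hR₁ hu
  obtain ⟨w, hw⟩ := Infinite.exists_notMem_finset ({0, 1, α} : Finset ℂ)
  simp only [Finset.mem_insert, Finset.mem_singleton, not_or] at hw
  obtain ⟨h0, h1, hα⟩ := hw
  have hvanish : -(6 * Ω) / (w * (w - 1) ^ 2 * (w - α)) = 0 :=
    (caseTwo_residual_eq h0 h1 hα).symm.trans (sub_eq_zero.2 (hId w h0 h1 hα))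
  simpa [h0, sub_ne_zero.2 h1, sub_ne_zero.2 hα] using hvanish

theorem kovacic_case_two_forces_Omega_zero
    (α Ω : ℂ) (hα0 : α ≠ 0) (hα1 : α ≠ 1)
    (R₁ u : ℂ → ℂ)
    (hR₁ : R₁ = fun z => (12 * z ^ 3 + 4 * (1 - 5 * α + 4 * Ω) * z ^ 2
        + α * (5 * α - 4 - 16 * Ω) * z + 3 * α ^ 2)
      / (16 * z ^ 2 * (z - 1) * (z - α) ^ 2))
    (hu : u = fun z => (1 / 2) * (1 / z + 4 / (z - 1) + 1 / (z - α)))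
    (hId : ∀ z : ℂ, z ≠ 0 → z ≠ 1 → z ≠ α →
      deriv (deriv u) z + 3 * u z * deriv u z + u z ^ 3 - 4 * u z * R₁ z
        = 2 * deriv R₁ z) :
    Ω = 0 :=
  kovacic_case_two_forces_Omega_zero_general α Ω R₁ u hR₁ hu hId
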